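/- Let W be a finite S-set such that |W^Q| = |W^{Q'}| whenever Q, Q' ≤ S are G-conjugate subgroups (i.e. W is F_S(G)-stable). Then there exist a finite list P₁, …, P_k of pairwise non-G-conjugate subgroups of S and p-integral rational numbers c₁, …, c_k such that for every subgroup Q ≤ S: |W^Q| = Σ_{i=1}^{k} c_i · f_{P_i}(Q), where f_P(Q) = (|N_G(Q,P)| · |S|) / (|P| · |N_G(Q,S)|). (This is the spanning half of the paper's Proposition that the elements β_P form a ℤ_(p)-basis of the p-localized Burnside ring A(F)_(p) for F = F_S(G), expressed through the homomorphism of marks: every F-stable set is a ℤ_(p)-linear combination of the β_P, whose marks are Φ_Q(β_P) = f_P(Q).) -/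

import Mathlib

/-!
Put `V = W × G/S`. Then `|V^Q| = |W^Q| · |(G/S)^Q|` and `f_P(Q) = |(G/P)^Q| / |(G/S)^Q|`, so
it suffices to write `Q ↦ |V^Q|` as a `ℤ_(p)`-combination of the marks `Q ↦ |(G/P)^Q|`. Marks
of finite `S`-sets satisfy the Burnside congruences `|N_S(R)| ∣ Σ_{n ∈ N_S(R)} |X^{R⟨n⟩}|`, and
those of `V` and of `G/P` are moreover `G`-stable; such functions form a `ℤ_(p)`-module. Pick fully
normalized representatives `P_i` of the `G`-classes of subgroups of `S` and peel off the classes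
from the largest order down. When `φ` vanishes on all subgroups of `S` larger than `R`, the
congruence at `R` reads `|R| φ(R) ∈ |N_S(R)| ℤ_(p)`; as `|R| · |(G/R)^R| = |N_G(R)|` and
`N_S(R)` has `p'`-index in `N_G(R)`, the coefficient `φ(R) / |(G/R)^R|` is `p`-integral.
-/

/-- Two subgroups of `G` are `G`-conjugate if conjugation by some element of `G`
carries one onto the other. -/
def GConj {G : Type*} [Group G] (P Q : Subgroup G) : Prop :=
  ∃ g : G, Subgroup.map (MulAut.conj g).toMonoidHom P = Q

/-- The transporter `N_G(A,B) = {g ∈ G : gAg⁻¹ ≤ B}`. -/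
def transporter {G : Type*} [Group G] (A B : Subgroup G) : Set G :=
  {g : G | ∀ a ∈ A, g * a * g⁻¹ ∈ B}

/-- A rational number is `p`-integral if it can be written with a denominator
prime to `p`. -/
def IsPIntegral (p : ℕ) (q : ℚ) : Prop :=
  ∃ a b : ℤ, ¬ (p : ℤ) ∣ b ∧ q * b = a

/-- The mark `f_P(Q) = |N_G(Q,P)|·|S| / (|P|·|N_G(Q,S)|)` of the basis element
`β_P` at the subgroup `Q`. -/
noncomputable def fpMark {G : Type*} [Group G] (S P Q : Subgroup G) : ℚ :=
  (Nat.card ↥(transporter Q P) * Nat.card ↥S : ℚ) /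
    (Nat.card ↥P * Nat.card ↥(transporter Q S))

/-- The number of fixed points `|X^Q|` of an `S`-set `X` under a subgroup
`Q` of the ambient group, where the `S`-action is given explicitly by `m`. -/
noncomputable def fixCard {H : Type*} [Group H] (S Q : Subgroup H) (X : Type)
    (m : MulAction ↥S X) : ℕ :=
  letI := m
  Nat.card ↥{x : X | ∀ s : ↥S, (s : H) ∈ Q → s • x = x}

open Subgroup MulAction Pointwise
open scoped Classical

section PIntegral

variable {p : ℕ} [Fact p.Prime]

theorem isPIntegral_iff_mem_integer {q : ℚ} :
    IsPIntegral p q ↔ q ∈ (Rat.padicValuation p).integer := by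
  constructor
  · rintro ⟨a, b, hb, hq⟩
    have hv := congrArg (Rat.padicValuation p) hq
    rw [map_mul, Rat.padicValuation_cast, Rat.padicValuation_cast,
      Int.padicValuation_eq_one_iff.mpr hb, mul_one] at hv
    rw [Valuation.mem_integer_iff, hv]
    exact Int.padicValuation_le_one p a
  · intro hq
    exact ⟨q.num, q.den, by exact_mod_cast Rat.padicValuation_le_one_iff.mp hq,
      Rat.mul_den_eq_num q⟩

theorem div_natCast_mem_integer {x : ℚ} (hx : x ∈ (Rat.padicValuation p).integer) {m : ℕ}
    (hm : ¬ p ∣ m) : x / m ∈ (Rat.padicValuation p).integer := by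
  have hvm : Rat.padicValuation p m = 1 := by
    rw [← Int.cast_natCast, Rat.padicValuation_cast, Int.padicValuation_eq_one_iff]
    exact_mod_cast hm
  rw [Valuation.mem_integer_iff, map_div₀, hvm, div_one]
  exact hx

end PIntegral

section Conjugation

variable {G : Type*} [Group G]

theorem GConj.symm {P Q : Subgroup G} : GConj P Q → GConj Q P := by
  rintro ⟨g, rfl⟩
  refine ⟨g⁻¹, ?_⟩
  show MulAut.conj g⁻¹ • MulAut.conj g • P = P
  rw [smul_smul, ← map_mul, inv_mul_cancel, map_one, one_smul]

theorem GConj.trans {P Q R : Subgroup G} : GConj P Q → GConj Q R → GConj P R := by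
  rintro ⟨g, rfl⟩ ⟨h, rfl⟩
  refine ⟨h * g, ?_⟩
  show MulAut.conj (h * g) • P = MulAut.conj h • MulAut.conj g • P
  rw [map_mul, mul_smul]

theorem card_conj_smul (g : G) (P : Subgroup G) : Nat.card ↥(MulAut.conj g • P) = Nat.card P :=
  card_map_of_injective (MulAut.conj g).injective

theorem GConj.card_eq {P Q : Subgroup G} : GConj P Q → Nat.card P = Nat.card Q := by
  rintro ⟨g, rfl⟩
  exact (card_conj_smul g P).symm

theorem GConj.of_smul_le [Finite G] {P Q : Subgroup G} {g : G} (h : MulAut.conj g • P ≤ Q)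
    (hcard : Nat.card Q ≤ Nat.card P) : GConj P Q :=
  ⟨g, eq_of_le_of_card_ge h (hcard.trans (card_conj_smul g P).ge)⟩

theorem Subgroup.card_lt_card_of_lt [Finite G] {H K : Subgroup G} (h : H < K) :
    Nat.card H < Nat.card K :=
  (card_le_of_le h.le).lt_of_ne fun e => h.ne (eq_of_le_of_card_ge h.le e.ge)

theorem Subgroup.card_subgroupOf_comm (H K : Subgroup G) :
    Nat.card (H.subgroupOf K) = Nat.card (K.subgroupOf H) := by
  rw [← inf_subgroupOf_right, ← inf_subgroupOf_left K H,
    Nat.card_congr (subgroupOfEquivOfLe inf_le_right).toEquiv,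
    Nat.card_congr (subgroupOfEquivOfLe inf_le_left).toEquiv]

theorem mem_transporter_iff {A B : Subgroup G} {g : G} :
    g ∈ transporter A B ↔ MulAut.conj g • A ≤ B :=
  ⟨fun h _ ⟨a, ha, e⟩ => e ▸ h a ha, fun h a ha => h ⟨a, ha, rfl⟩⟩

theorem card_transporter_conj_smul (g : G) (A B : Subgroup G) :
    Nat.card (transporter (MulAut.conj g • A) B) = Nat.card (transporter A B) :=
  Nat.card_congr <| (Equiv.mulRight g).subtypeEquiv fun t => by
    simp only [Equiv.coe_mulRight, mem_transporter_iff, map_mul, mul_smul]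

theorem mem_transporter_iff_mk_inv_mem_fixedPoints {A B : Subgroup G} {g : G} :
    g ∈ transporter A B ↔ ((g⁻¹ : G) : G ⧸ B) ∈ fixedPoints A (G ⧸ B) := by
  have key : ∀ a : A, a • ((g⁻¹ : G) : G ⧸ B) = g⁻¹ ↔ g * (a : G)⁻¹ * g⁻¹ ∈ B := fun a => by
    change ((a * g⁻¹ : G) : G ⧸ B) = ((g⁻¹ : G) : G ⧸ B) ↔ _
    rw [QuotientGroup.eq]
    simp [mul_assoc]
  refine ⟨fun h a => (key a).mpr (h _ (inv_mem a.2)), fun h a ha => ?_⟩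
  simpa using (key ⟨a⁻¹, inv_mem ha⟩).mp (h _)

theorem card_transporter (A B : Subgroup G) :
    Nat.card (transporter A B) = Nat.card B * Nat.card (fixedPoints A (G ⧸ B)) := by
  rw [← QuotientGroup.card_preimage_mk]
  exact Nat.card_congr <| (Equiv.inv G).subtypeEquiv fun g => by
    rw [Equiv.inv_apply, Set.mem_preimage, mem_transporter_iff_mk_inv_mem_fixedPoints]

end Conjugation

section Marks

variable {G : Type*} [Group G] (S : Subgroup G)

/-- `|X^Q|` for `Q ≤ S`; for other `Q` this counts the fixed points of `Q ⊓ S`. -/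
noncomputable def marks (X : Type*) [MulAction S X] (Q : Subgroup G) : ℚ :=
  Nat.card (fixedPoints (Q.subgroupOf S) X)

theorem fixCard_eq_marks (Q : Subgroup G) (X : Type) (m : MulAction S X) :
    (fixCard S Q X m : ℚ) = @marks G _ S X m Q := by
  unfold fixCard marks
  congr 3
  ext x
  simp [Subtype.forall, mem_subgroupOf]

theorem marks_map_subtype (X : Type*) [MulAction S X] (K : Subgroup S) :
    marks S X (K.map S.subtype) = Nat.card (fixedPoints K X) := by
  rw [marks, subgroupOf, comap_map_eq_self_of_injective S.subtype_injective]

theorem marks_prod (X Y : Type*) [MulAction S X] [MulAction S Y] (Q : Subgroup G) :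
    marks S (X × Y) Q = marks S X Q * marks S Y Q := by
  rw [marks, marks, marks, ← Nat.cast_mul, ← Nat.card_prod]
  congr 1
  refine Nat.card_congr ((Equiv.subtypeEquivRight fun z => ?_).trans Equiv.subtypeProdEquivProd)
  simp only [mem_fixedPoints, Prod.ext_iff, Prod.smul_fst, Prod.smul_snd, forall_and]

variable {S}

theorem marks_quotient {Q : Subgroup G} (hQ : Q ≤ S) (P : Subgroup G) :
    marks S (G ⧸ P) Q = Nat.card (fixedPoints Q (G ⧸ P)) := by
  rw [marks]
  congr 1
  exact Nat.card_congr <| Equiv.subtypeEquivRight fun x =>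
    ⟨fun h q => h ⟨⟨q, hQ q.2⟩, q.2⟩, fun h k => h ⟨_, k.2⟩⟩

theorem natCast_card_transporter {Q : Subgroup G} (hQ : Q ≤ S) (P : Subgroup G) :
    (Nat.card (transporter Q P) : ℚ) = Nat.card P * marks S (G ⧸ P) Q := by
  rw [card_transporter, marks_quotient hQ, Nat.cast_mul]

theorem fpMark_eq_div [Finite G] {Q : Subgroup G} (hQ : Q ≤ S) (P : Subgroup G) :
    fpMark S P Q = marks S (G ⧸ P) Q / marks S (G ⧸ S) Q := by
  have hP : (Nat.card P : ℚ) ≠ 0 := Nat.cast_ne_zero.mpr Nat.card_pos.ne'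
  have hS : (Nat.card S : ℚ) ≠ 0 := Nat.cast_ne_zero.mpr Nat.card_pos.ne'
  rw [fpMark, natCast_card_transporter hQ, natCast_card_transporter hQ, mul_right_comm,
    mul_left_comm, ← mul_assoc, mul_comm (Nat.card S : ℚ),
    mul_div_mul_left _ _ (mul_ne_zero hP hS)]

theorem marks_quotient_conj_smul [Finite G] {Q : Subgroup G} {g : G} (hQ : Q ≤ S)
    (hgQ : MulAut.conj g • Q ≤ S) (P : Subgroup G) :
    marks S (G ⧸ P) (MulAut.conj g • Q) = marks S (G ⧸ P) Q := by
  have hP : (Nat.card P : ℚ) ≠ 0 := Nat.cast_ne_zero.mpr Nat.card_pos.ne'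
  refine mul_left_cancel₀ hP ?_
  rw [← natCast_card_transporter hQ, ← natCast_card_transporter hgQ, card_transporter_conj_smul]

theorem marks_quotient_eq_of_gConj [Finite G] {Q Q' : Subgroup G} (hQ : Q ≤ S) (hQ' : Q' ≤ S)
    (h : GConj Q Q') (P : Subgroup G) : marks S (G ⧸ P) Q = marks S (G ⧸ P) Q' := by
  obtain ⟨g, rfl⟩ := h
  exact (marks_quotient_conj_smul hQ hQ' P).symm

theorem marks_quotient_ne_zero [Finite G] {Q P : Subgroup G} (hQ : Q ≤ S) (hQP : Q ≤ P) :
    marks S (G ⧸ P) Q ≠ 0 := by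
  have : Nonempty (transporter Q P) :=
    ⟨⟨1, mem_transporter_iff.mpr (by rwa [map_one, one_smul])⟩⟩
  have hne : (Nat.card (transporter Q P) : ℚ) ≠ 0 := Nat.cast_ne_zero.mpr Nat.card_pos.ne'
  rw [natCast_card_transporter hQ] at hne
  exact right_ne_zero_of_mul hne

theorem exists_conj_smul_le_of_marks_ne_zero [Finite G] {Q P : Subgroup G} (hQ : Q ≤ S)
    (h : marks S (G ⧸ P) Q ≠ 0) : ∃ g : G, MulAut.conj g • Q ≤ P := by
  have hne : (Nat.card (transporter Q P) : ℚ) ≠ 0 := by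
    rw [natCast_card_transporter hQ]
    exact mul_ne_zero (Nat.cast_ne_zero.mpr Nat.card_pos.ne') h
  obtain ⟨⟨g, hg⟩⟩ := Nat.card_ne_zero.mp (Nat.cast_ne_zero.mp hne) |>.1
  exact ⟨g, mem_transporter_iff.mp hg⟩

theorem card_normalizer_eq_card_mul_card_fixedPoints [Finite G] (R : Subgroup G) :
    Nat.card (normalizer (R : Set G)) = Nat.card R * Nat.card (fixedPoints R (G ⧸ R)) := by
  rw [← (R.subgroupOf (normalizer (R : Set G))).card_mul_index,
    Nat.card_congr (subgroupOfEquivOfLe le_normalizer).toEquiv,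
    Nat.card_congr (Sylow.fixedPointsMulLeftCosetsEquivQuotient R)]
  rfl

end Marks

section Congruence

variable {H : Type*} [Group H]

theorem mem_fixedPoints_subgroup_iff {X : Type*} [MulAction H X] {K : Subgroup H} {x : X} :
    x ∈ fixedPoints K X ↔ K ≤ stabilizer H x :=
  ⟨fun h k hk => h ⟨k, hk⟩, fun h k => h k.2⟩

theorem smul_mem_fixedPoints_of_mem_normalizer {X : Type*} [MulAction H X] {R : Subgroup H}
    {n : H} (hn : n ∈ normalizer (R : Set H)) {x : X} (hx : x ∈ fixedPoints R X) :
    n • x ∈ fixedPoints R X := by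
  intro r
  have hr : n⁻¹ * r * n ∈ R := by simpa using (mem_normalizer_iff.mp (inv_mem hn) r).mp r.2
  rw [Submonoid.smul_def, ← inv_smul_eq_iff, smul_smul, smul_smul]
  exact hx ⟨_, hr⟩

theorem card_normalizer_dvd_sum_card_fixedPoints_sup_zpowers [Fintype H] (X : Type*)
    [MulAction H X] [Finite X] (R : Subgroup H) :
    Nat.card (normalizer (R : Set H)) ∣
      ∑ n : normalizer (R : Set H), Nat.card (fixedPoints ↥(R ⊔ zpowers (n : H)) X) := by
  let Y : SubMulAction (normalizer (R : Set H)) X :=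
    { carrier := fixedPoints R X
      smul_mem' := fun n _ hx => smul_mem_fixedPoints_of_mem_normalizer n.2 hx }
  have hY : ∀ n : normalizer (R : Set H),
      fixedBy Y n ≃ fixedPoints ↥(R ⊔ zpowers (n : H)) X := fun n =>
    (Equiv.subtypeEquivRight fun y => Subtype.ext_iff).trans <|
      (Equiv.subtypeSubtypeEquivSubtypeInter (· ∈ Y) fun x => (n : H) • x = x).trans <|
        Equiv.subtypeEquivRight fun x => by
          change x ∈ fixedPoints R X ∧ _ ↔ _
          rw [mem_fixedPoints_subgroup_iff, mem_fixedPoints_subgroup_iff, sup_le_iff, zpowers_le,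
            mem_stabilizer_iff]
  have := Fintype.ofFinite X
  have hB := sum_card_fixedBy_eq_card_orbits_mul_card_group (normalizer (R : Set H)) Y
  simp only [← Nat.card_eq_fintype_card] at hB
  refine ⟨Nat.card (Quotient (orbitRel (normalizer (R : Set H)) Y)), ?_⟩
  rw [mul_comm, ← hB]
  exact Finset.sum_congr rfl fun n _ => (Nat.card_congr (hY n)).symm

theorem sum_normalizer_sup_zpowers_eq [Fintype H] {M : Type*} [AddCommMonoid M]
    (K : Subgroup H) (f : Subgroup H → M) (hf : ∀ L, K < L → f L = 0) :
    ∑ n : normalizer (K : Set H), f (K ⊔ zpowers (n : H)) = Nat.card K • f K := by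
  have hterm : ∀ n : normalizer (K : Set H),
      f (K ⊔ zpowers (n : H)) = if (n : H) ∈ K then f K else 0 := fun n => by
    split_ifs with hn
    · rw [sup_eq_left.mpr (zpowers_le.mpr hn)]
    · exact hf _ (left_lt_sup.mpr fun h => hn (zpowers_le.mp h))
  rw [Finset.sum_congr rfl fun n _ => hterm n, Finset.sum_ite, Finset.sum_const_zero, add_zero,
    Finset.sum_const, ← Fintype.card_subtype, ← Nat.card_eq_fintype_card]
  congr 1
  exact Nat.card_congr (subgroupOfEquivOfLe le_normalizer).toEquiv

end Congruence

section FullyNormalized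

variable {p : ℕ} [Fact p.Prime] {G : Type*} [Group G] [Finite G]

theorem exists_gConj_not_dvd_relIndex_normalizer (S : Sylow p G) {Q : Subgroup G}
    (hQ : Q ≤ S) : ∃ R : Subgroup G, R ≤ S ∧ GConj Q R ∧
      ¬ p ∣ (S : Subgroup G).relIndex (normalizer (R : Set G)) := by
  set N := normalizer (Q : Set G)
  obtain ⟨U, hQU⟩ := ((S.isPGroup'.to_le hQ).comap_subtype (K := N)).exists_le_sylow
  obtain ⟨T, hUT⟩ := (U.isPGroup'.map N.subtype).exists_le_sylow
  obtain ⟨g, hg⟩ := MulAction.exists_smul_eq G T S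
  have hST : (S : Subgroup G) = MulAut.conj g • (T : Subgroup G) := by rw [← hg]; rfl
  have hQT : Q ≤ T := by
    have := map_mono (f := N.subtype) hQU
    rw [map_comap_eq, range_subtype, inf_of_le_right le_normalizer] at this
    exact this.trans hUT
  have hN : normalizer ((MulAut.conj g • Q : Subgroup G) : Set G) = MulAut.conj g • N :=
    (map_equiv_normalizer_eq Q (MulAut.conj g)).symm
  refine ⟨MulAut.conj g • Q, hST ▸ pointwise_smul_le_pointwise_smul_iff.mpr hQT, ⟨g, rfl⟩, ?_⟩
  rw [hST, hN, relIndex_pointwise_smul]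
  exact fun h => U.not_dvd_index (h.trans (index_dvd_of_le (map_le_iff_le_comap.mp hUT)))

end FullyNormalized

section StableMarks

variable (p : ℕ) [Fact p.Prime] {G : Type*} [Group G] [Fintype G]

/-- The `G`-stable functions satisfying the Burnside congruence at every `R ≤ S`, with `N_S(R)`
computed inside `S` and the sum taken over its elements rather than over cosets of `R`. -/
def stableMarks (S : Subgroup G) :
    Submodule (Rat.padicValuation p).integer (Subgroup G → ℚ) where
  carrier := {φ | (∀ Q Q', Q ≤ S → Q' ≤ S → GConj Q Q' → φ Q = φ Q') ∧
    ∀ R : Subgroup S, (∑ n : normalizer (R : Set S), φ ((R ⊔ zpowers (n : S)).map S.subtype)) /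
      Nat.card (normalizer (R : Set S)) ∈ (Rat.padicValuation p).integer}
  zero_mem' := ⟨fun _ _ _ _ _ => rfl, fun _ => by simp⟩
  add_mem' ha hb :=
    ⟨fun Q Q' hQ hQ' h => by
        rw [Pi.add_apply, Pi.add_apply, ha.1 Q Q' hQ hQ' h, hb.1 Q Q' hQ hQ' h],
      fun R => by
        simpa only [Pi.add_apply, Finset.sum_add_distrib, add_div] using add_mem (ha.2 R) (hb.2 R)⟩
  smul_mem' c φ hφ :=
    ⟨fun Q Q' hQ hQ' h => by rw [Pi.smul_apply, Pi.smul_apply, hφ.1 Q Q' hQ hQ' h],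
      fun R => by
        simpa only [Pi.smul_apply, Subring.smul_def, smul_eq_mul, ← Finset.mul_sum, mul_div_assoc]
          using mul_mem c.2 (hφ.2 R)⟩

variable {p} {S : Subgroup G}

theorem marks_mem_stableMarks (X : Type*) [MulAction S X] [Finite X]
    (hX : ∀ Q Q', Q ≤ S → Q' ≤ S → GConj Q Q' → marks S X Q = marks S X Q') :
    marks S X ∈ stableMarks p S := by
  refine ⟨hX, fun R => ?_⟩
  obtain ⟨t, ht⟩ := card_normalizer_dvd_sum_card_fixedPoints_sup_zpowers X R
  have hN : (Nat.card (normalizer (R : Set S)) : ℚ) ≠ 0 :=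
    Nat.cast_ne_zero.mpr Nat.card_pos.ne'
  simp only [marks_map_subtype]
  rw [← Nat.cast_sum, ht, Nat.cast_mul, mul_div_cancel_left₀ _ hN]
  exact natCast_mem _ t

theorem marks_quotient_mem_stableMarks (P : Subgroup G) :
    marks S (G ⧸ P) ∈ stableMarks p S :=
  marks_mem_stableMarks _ fun _ _ hQ hQ' h => marks_quotient_eq_of_gConj hQ hQ' h P

theorem div_marks_quotient_self_mem_integer {φ : Subgroup G → ℚ}
    (hφ : φ ∈ stableMarks p S) {R : Subgroup G} (hRS : R ≤ S)
    (hR : ¬ p ∣ S.relIndex (normalizer (R : Set G)))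
    (hvan : ∀ Q, Q ≤ S → Nat.card R < Nat.card Q → φ Q = 0) :
    φ R / marks S (G ⧸ R) R ∈ (Rat.padicValuation p).integer := by
  set R' := R.subgroupOf S
  have hR'map : R'.map S.subtype = R := by rw [subgroupOf_map_subtype, inf_of_le_left hRS]
  have hcard : Nat.card R' = Nat.card R := by
    rw [← card_map_of_injective S.subtype_injective, hR'map]
  have hsum : ∑ n : normalizer (R' : Set S), φ ((R' ⊔ zpowers (n : S)).map S.subtype)
      = Nat.card R * φ R := by
    rw [sum_normalizer_sup_zpowers_eq R' (fun L => φ (L.map S.subtype)), hR'map, nsmul_eq_mul,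
      hcard]
    intro L hL
    refine hvan _ (map_subtype_le L) ?_
    rw [card_map_of_injective S.subtype_injective, ← hcard]
    exact card_lt_card_of_lt hL
  have hN : Nat.card (normalizer (R : Set G))
      = Nat.card (normalizer (R' : Set S)) * S.relIndex (normalizer (R : Set G)) := by
    rw [← subgroupOf_normalizer_eq hRS, card_subgroupOf_comm, relIndex, card_mul_index]
  have hψ : (Nat.card (normalizer (R : Set G)) : ℚ) = Nat.card R * marks S (G ⧸ R) R := by
    rw [card_normalizer_eq_card_mul_card_fixedPoints, marks_quotient hRS, Nat.cast_mul]
  have hRne : (Nat.card R : ℚ) ≠ 0 := Nat.cast_ne_zero.mpr Nat.card_pos.ne'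
  have key : φ R / marks S (G ⧸ R) R
      = (∑ n : normalizer (R' : Set S), φ ((R' ⊔ zpowers (n : S)).map S.subtype)) /
          Nat.card (normalizer (R' : Set S)) / S.relIndex (normalizer (R : Set G)) := by
    rw [hsum, div_div, ← Nat.cast_mul, ← hN, hψ, mul_div_mul_left _ _ hRne]
  rw [key]
  exact div_natCast_mem_integer (hφ.2 R') hR

end StableMarks

section Transversal

variable (p : ℕ) [Fact p.Prime] {G : Type*} [Group G]

/-- Representatives of the `G`-classes of subgroups of `S`, each fully normalized in the sense
that `N_S(P i)` has `p'`-index in `N_G(P i)`. -/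
structure IsFullyNormalizedTransversal (S : Subgroup G) {ι : Type*} (P : ι → Subgroup G) :
    Prop where
  le : ∀ i, P i ≤ S
  not_dvd_relIndex : ∀ i, ¬ p ∣ S.relIndex (normalizer (P i : Set G))
  not_gConj : ∀ i j, i ≠ j → ¬ GConj (P i) (P j)
  exists_gConj : ∀ Q, Q ≤ S → ∃ i, GConj Q (P i)

theorem exists_isFullyNormalizedTransversal [Finite G] (S : Sylow p G) :
    ∃ (k : ℕ) (P : Fin k → Subgroup G), IsFullyNormalizedTransversal p S P := by
  -- A maximal family of pairwise non-conjugate fully normalized subgroups meets every class.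
  let good : Set (Finset (Subgroup G)) := {F |
    (∀ R ∈ F, R ≤ S ∧ ¬ p ∣ (S : Subgroup G).relIndex (normalizer (R : Set G))) ∧
      (F : Set (Subgroup G)).Pairwise fun A B => ¬ GConj A B}
  obtain ⟨F, hF, hmax⟩ := good.toFinite.exists_maximal ⟨∅, by simp [good]⟩
  have hcover : ∀ Q : Subgroup G, Q ≤ S → ∃ R ∈ F, GConj Q R := by
    intro Q hQ
    by_contra! hQF
    obtain ⟨R, hRS, hQR, hR⟩ := exists_gConj_not_dvd_relIndex_normalizer S hQ
    have hins : insert R F ∈ good := by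
      refine ⟨fun R' hR' => ?_, ?_⟩
      · rcases Finset.mem_insert.mp hR' with rfl | hR'
        exacts [⟨hRS, hR⟩, hF.1 R' hR']
      · rw [Finset.coe_insert, Set.pairwise_insert]
        exact ⟨hF.2, fun R' hR' _ => ⟨fun h => hQF R' hR' (hQR.trans h),
          fun h => hQF R' hR' (hQR.trans h.symm)⟩⟩
    exact hQF R (hmax hins (Finset.subset_insert R F) (Finset.mem_insert_self R F)) hQR
  let P : Fin F.card → Subgroup G := fun i => F.equivFin.symm i
  have hPF : ∀ i, P i ∈ F := fun i => (F.equivFin.symm i).2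
  refine ⟨F.card, P, fun i => (hF.1 _ (hPF i)).1, fun i => (hF.1 _ (hPF i)).2,
    fun i j hij => hF.2 (hPF i) (hPF j) fun e =>
      hij (F.equivFin.symm.injective (Subtype.ext e)),
    fun Q hQ => ?_⟩
  obtain ⟨R, hR, hQR⟩ := hcover Q hQ
  exact ⟨F.equivFin ⟨R, hR⟩, by simpa [P] using hQR⟩

end Transversal

section Decomposition

variable {p : ℕ} [Fact p.Prime] {G : Type*} [Group G] [Fintype G] {S : Subgroup G}
  {ι : Type*} [Fintype ι] {P : ι → Subgroup G}

theorem IsFullyNormalizedTransversal.exists_eq_sum_of_forall_card_lt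
    (hP : IsFullyNormalizedTransversal p S P) {n : ℕ} {φ : Subgroup G → ℚ}
    (hφ : φ ∈ stableMarks p S) (hvan : ∀ Q, Q ≤ S → n + 1 < Nat.card Q → φ Q = 0) :
    ∃ c : ι → (Rat.padicValuation p).integer, ∀ Q, Q ≤ S → n < Nat.card Q →
      φ Q = ∑ i, (c i : ℚ) * marks S (G ⧸ P i) Q := by
  let c : ι → (Rat.padicValuation p).integer := fun i =>
    if h : Nat.card (P i) = n + 1 then
      ⟨φ (P i) / marks S (G ⧸ P i) (P i), div_marks_quotient_self_mem_integer hφ (hP.le i)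
        (hP.not_dvd_relIndex i) fun Q hQ hlt => hvan Q hQ (h ▸ hlt)⟩
    else 0
  refine ⟨c, fun Q hQ hnQ => ?_⟩
  have hzero : ∀ i, ¬ GConj Q (P i) → (c i : ℚ) * marks S (G ⧸ P i) Q = 0 := by
    intro i hQi
    by_cases h : Nat.card (P i) = n + 1
    · refine mul_eq_zero_of_right _ (not_not.mp fun hne => hQi ?_)
      obtain ⟨g, hg⟩ := exists_conj_smul_le_of_marks_ne_zero hQ hne
      exact GConj.of_smul_le hg (h ▸ hnQ)
    · simp only [c, dif_neg h, ZeroMemClass.coe_zero, zero_mul]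
  obtain ⟨i₀, hQi₀⟩ := hP.exists_gConj Q hQ
  rw [Finset.sum_eq_single i₀ (fun i _ hi => hzero i fun h =>
    hP.not_gConj i₀ i (Ne.symm hi) (hQi₀.symm.trans h)) (by simp)]
  by_cases h : Nat.card (P i₀) = n + 1
  · simp only [c, dif_pos h]
    rw [marks_quotient_eq_of_gConj hQ (hP.le i₀) hQi₀,
      div_mul_cancel₀ _ (marks_quotient_ne_zero (hP.le i₀) le_rfl),
      hφ.1 Q _ hQ (hP.le i₀) hQi₀]
  · have := hQi₀.card_eq
    simp only [c, dif_neg h, ZeroMemClass.coe_zero, zero_mul]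
    exact hvan Q hQ (by omega)

theorem IsFullyNormalizedTransversal.exists_eq_sum (hP : IsFullyNormalizedTransversal p S P)
    (n : ℕ) {φ : Subgroup G → ℚ} (hφ : φ ∈ stableMarks p S)
    (hvan : ∀ Q, Q ≤ S → n < Nat.card Q → φ Q = 0) :
    ∃ c : ι → (Rat.padicValuation p).integer, ∀ Q, Q ≤ S →
      φ Q = ∑ i, (c i : ℚ) * marks S (G ⧸ P i) Q := by
  induction n generalizing φ with
  | zero => exact ⟨0, fun Q hQ => by simp [hvan Q hQ Nat.card_pos]⟩
  | succ n ih =>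
    obtain ⟨c₁, hc₁⟩ := hP.exists_eq_sum_of_forall_card_lt hφ hvan
    have hrest : φ - ∑ i, c₁ i • marks S (G ⧸ P i) ∈ stableMarks p S :=
      sub_mem hφ (sum_mem fun i _ => Submodule.smul_mem _ _ (marks_quotient_mem_stableMarks _))
    have happly : ∀ Q, (φ - ∑ i, c₁ i • marks S (G ⧸ P i)) Q
        = φ Q - ∑ i, (c₁ i : ℚ) * marks S (G ⧸ P i) Q := fun Q => by
      simp [Finset.sum_apply, Subring.smul_def]
    obtain ⟨c₂, hc₂⟩ := ih hrest fun Q hQ hlt => by rw [happly, hc₁ Q hQ hlt, sub_self]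
    refine ⟨c₁ + c₂, fun Q hQ => ?_⟩
    have := hc₂ Q hQ
    rw [happly, sub_eq_iff_eq_add] at this
    simp only [this, Pi.add_apply, Subring.coe_add, add_mul, Finset.sum_add_distrib, add_comm]

end Decomposition

theorem stmt13 (p : ℕ) [Fact p.Prime] (G : Type*) [Group G] [Fintype G]
    (S : Sylow p G) (W : Type) (fW : Fintype W)
    (mW : MulAction ↥(S : Subgroup G) W)
    (hstable : ∀ Q Q' : Subgroup G, Q ≤ ↑S → Q' ≤ ↑S → GConj Q Q' →
      fixCard ↑S Q W mW = fixCard ↑S Q' W mW) :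
    ∃ (k : ℕ) (P : Fin k → Subgroup G) (c : Fin k → ℚ),
      (∀ i, P i ≤ ↑S) ∧
      (∀ i j, i ≠ j → ¬ GConj (P i) (P j)) ∧
      (∀ i, IsPIntegral p (c i)) ∧
      ∀ Q : Subgroup G, Q ≤ ↑S →
        (fixCard ↑S Q W mW : ℚ) = ∑ i, c i * fpMark ↑S (P i) Q := by
  let _ := mW
  obtain ⟨k, P, hP⟩ := exists_isFullyNormalizedTransversal p S
  have hV : marks (S : Subgroup G) (W × G ⧸ (S : Subgroup G)) ∈ stableMarks p S :=
    marks_mem_stableMarks _ fun Q Q' hQ hQ' h => by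
      rw [marks_prod, marks_prod, ← fixCard_eq_marks, ← fixCard_eq_marks, hstable Q Q' hQ hQ' h,
        marks_quotient_eq_of_gConj hQ hQ' h]
  obtain ⟨c, hc⟩ := hP.exists_eq_sum (Nat.card G) hV fun Q _ hQ =>
    absurd hQ (card_le_card_group Q).not_gt
  refine ⟨k, P, fun i => c i, hP.le, hP.not_gConj,
    fun i => isPIntegral_iff_mem_integer.mpr (c i).2, fun Q hQ => ?_⟩
  have hS := marks_quotient_ne_zero (S := (S : Subgroup G)) hQ hQ
  calc (fixCard S Q W mW : ℚ)
      = marks S W Q * marks S (G ⧸ (S : Subgroup G)) Q / marks S (G ⧸ (S : Subgroup G)) Q := by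
        rw [fixCard_eq_marks, mul_div_cancel_right₀ _ hS]
    _ = (∑ i, (c i : ℚ) * marks S (G ⧸ P i) Q) / marks S (G ⧸ (S : Subgroup G)) Q := by
        rw [← marks_prod, hc Q hQ]
    _ = ∑ i, (c i : ℚ) * fpMark S (P i) Q := by
        simp only [Finset.sum_div, fpMark_eq_div hQ, mul_div_assoc]
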